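/- arXiv:1308.3193 — 9 statements merged into one kernel-verified Lean document; each statement's English description precedes it below -/
import Mathlib

section
/- Let z ∈ ℝ^r be a vector and e ∈ ℝ^r the all-ones vector. If ⟨z, e⟩ ≥ √((r-1)/r) · ‖z‖ · ‖e‖, then every entry of z is nonnegative. -/
open BigOperators

theorem stmt_0 (r : ℕ) (hr : 1 ≤ r) (z : Fin r → ℝ)
    (h : Real.sqrt (((r : ℝ) - 1) / r) * Real.sqrt (∑ i, z i ^ 2) * Real.sqrt r ≤ ∑ i, z i) :
    ∀ i, 0 ≤ z i := by
  by_contra hcon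
  push_neg at hcon
  obtain ⟨j, hj⟩ := hcon
  have hr0 : (0:ℝ) < r := by exact_mod_cast hr
  have hr1 : (0:ℝ) ≤ (r:ℝ) - 1 := by
    have : (1:ℝ) ≤ r := by exact_mod_cast hr
    linarith
  set Q := ∑ i, z i ^ 2 with hQdef
  have hQ0 : 0 ≤ Q := Finset.sum_nonneg fun i _ => sq_nonneg _
  -- simplify LHS of h to √((r-1)*Q)
  have hLHS : Real.sqrt (((r : ℝ) - 1) / r) * Real.sqrt Q * Real.sqrt r
      = Real.sqrt (((r:ℝ) - 1) * Q) := by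
    rw [← Real.sqrt_mul (by positivity) Q, ← Real.sqrt_mul (by positivity) (r:ℝ)]
    congr 1
    field_simp
  rw [hLHS] at h
  set S := ∑ i, z i with hSdef
  set s := Finset.univ.erase j with hsdef
  have hjmem : j ∈ (Finset.univ : Finset (Fin r)) := Finset.mem_univ j
  have hT : ∑ i ∈ s, z i = S - z j := Finset.sum_erase_eq_sub hjmem
  have hcard : (s.card : ℝ) = (r:ℝ) - 1 := by
    rw [hsdef, Finset.card_erase_of_mem hjmem]
    simp
    rw [Nat.cast_sub hr]
    simp
  have hCS : (∑ i ∈ s, z i) ^ 2 ≤ (s.card : ℝ) * ∑ i ∈ s, z i ^ 2 :=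
    sq_sum_le_card_mul_sum_sq
  have hQle : ∑ i ∈ s, z i ^ 2 ≤ Q :=
    Finset.sum_le_sum_of_subset_of_nonneg (Finset.subset_univ s)
      (fun i _ _ => sq_nonneg _)
  have hT2 : (S - z j) ^ 2 ≤ ((r:ℝ) - 1) * Q := by
    rw [← hT, ← hcard]
    exact hCS.trans (by nlinarith [hcard, hr1])
  have hsq : 0 ≤ Real.sqrt (((r:ℝ) - 1) * Q) := Real.sqrt_nonneg _
  have hTgt : Real.sqrt (((r:ℝ) - 1) * Q) < S - z j := by linarith
  have := Real.sq_sqrt (by positivity : (0:ℝ) ≤ ((r:ℝ) - 1) * Q)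
  nlinarith [hTgt, hsq, hT2]
end

section
/- The constant √((r-1)/r) in the previous criterion is optimal: for every c < √((r-1)/r) with r ≥ 2, there exists a vector z ∈ ℝ^r with at least one negative entry such that ⟨z, e⟩ > c · ‖z‖ · ‖e‖. -/
open BigOperators

theorem stmt_2 (r : ℕ) (hr : 2 ≤ r) (c : ℝ) (hc : c < Real.sqrt (((r : ℝ) - 1) / r)) :
    ∃ z : Fin r → ℝ, (∃ i, z i < 0) ∧
      c * Real.sqrt (∑ i, z i ^ 2) * Real.sqrt r < ∑ i, z i := by
  have hrR : (2:ℝ) ≤ (r:ℝ) := by exact_mod_cast hr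
  set R : ℝ := (r:ℝ) - 1 with hRdef
  have hR1 : (1:ℝ) ≤ R := by simp [hRdef]; linarith
  have hR0 : (0:ℝ) < R := by linarith
  have hrpos : (0:ℝ) < (r:ℝ) := by linarith
  set c' : ℝ := max c 0 with hc'def
  have hc'0 : 0 ≤ c' := le_max_right _ _
  have hcc' : c ≤ c' := le_max_left _ _
  have hfrac : (0:ℝ) < R / r := div_pos hR0 hrpos
  have hc' : c' < Real.sqrt (R / r) :=
    max_lt hc (Real.sqrt_pos.mpr hfrac)
  have hkey : c' ^ 2 < R / r := by
    have := (Real.lt_sqrt hc'0).mp hc'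
    exact this
  have hkey2 : c' ^ 2 * r < R := by
    rw [lt_div_iff₀ hrpos] at hkey
    linarith
  set δ : ℝ := R ^ 2 - c' ^ 2 * r * R with hδdef
  have hδ0 : 0 < δ := by
    have : c' ^ 2 * r * R < R * R := by nlinarith
    nlinarith
  set ε : ℝ := min (1/2) (δ / (4 * R)) with hεdef
  have hε0 : 0 < ε := lt_min (by norm_num) (div_pos hδ0 (by linarith))
  have hε12 : ε ≤ 1/2 := min_le_left _ _
  have hε4 : 4 * R * ε ≤ δ := by
    have h := min_le_right (1/2) (δ / (4 * R))
    have h4R : (0:ℝ) < 4 * R := by linarith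
    calc 4 * R * ε ≤ 4 * R * (δ / (4 * R)) := by
          exact mul_le_mul_of_nonneg_left h (by linarith)
      _ = δ := by field_simp
  have hrpos' : 0 < r := by omega
  set i0 : Fin r := ⟨0, hrpos'⟩ with hi0
  refine ⟨fun i => if i = i0 then -ε else 1, ⟨i0, by simp; linarith⟩, ?_⟩
  have hsum : ∑ i, (fun i => if i = i0 then -ε else 1) i = R - ε := by
    rw [← Finset.add_sum_erase Finset.univ _ (Finset.mem_univ i0)]
    have : ∑ i ∈ Finset.univ.erase i0, (if i = i0 then -ε else (1:ℝ)) =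
        ∑ i ∈ Finset.univ.erase i0, (1:ℝ) := by
      apply Finset.sum_congr rfl
      intro i hi
      simp [Finset.ne_of_mem_erase hi]
    rw [this]
    simp [Finset.card_erase_of_mem, hRdef]
    have : (↑(r-1) : ℝ) = (r:ℝ) - 1 := by
      have : (1:ℕ) ≤ r := by omega
      push_cast [Nat.cast_sub this]
      ring
    rw [this]; ring
  have hsq : ∑ i, ((fun i => if i = i0 then -ε else 1) i) ^ 2 = ε ^ 2 + R := by
    rw [← Finset.add_sum_erase Finset.univ _ (Finset.mem_univ i0)]
    have : ∑ i ∈ Finset.univ.erase i0, (if i = i0 then -ε else (1:ℝ)) ^ 2 =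
        ∑ i ∈ Finset.univ.erase i0, (1:ℝ) := by
      apply Finset.sum_congr rfl
      intro i hi
      simp [Finset.ne_of_mem_erase hi]
    rw [this]
    simp [Finset.card_erase_of_mem, hRdef]
    have : (↑(r-1) : ℝ) = (r:ℝ) - 1 := by
      have : (1:ℕ) ≤ r := by omega
      push_cast [Nat.cast_sub this]
      ring
    rw [this]
  rw [hsum, hsq]
  have hRε : 0 < R - ε := by linarith
  have hA : (0:ℝ) ≤ ε ^ 2 + R := by positivity
  have hle : c * Real.sqrt (ε ^ 2 + R) * Real.sqrt r ≤
      c' * Real.sqrt (ε ^ 2 + R) * Real.sqrt r := by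
    have h1 : 0 ≤ Real.sqrt (ε ^ 2 + R) * Real.sqrt r := by positivity
    calc c * Real.sqrt (ε ^ 2 + R) * Real.sqrt r
        = c * (Real.sqrt (ε ^ 2 + R) * Real.sqrt r) := by ring
      _ ≤ c' * (Real.sqrt (ε ^ 2 + R) * Real.sqrt r) :=
          mul_le_mul_of_nonneg_right hcc' h1
      _ = c' * Real.sqrt (ε ^ 2 + R) * Real.sqrt r := by ring
  have hmain : c' * Real.sqrt (ε ^ 2 + R) * Real.sqrt r < R - ε := by
    have heq : c' * Real.sqrt (ε ^ 2 + R) * Real.sqrt r =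
        Real.sqrt (c' ^ 2 * (ε ^ 2 + R) * r) := by
      rw [Real.sqrt_mul (by positivity), Real.sqrt_mul (by positivity),
        Real.sqrt_sq hc'0]
    rw [heq]
    rw [Real.sqrt_lt' hRε]
    nlinarith [sq_nonneg ε, mul_pos hε0 hR0]
  linarith
end

section
/- Let β_1, ..., β_n ∈ ℝ^r be vectors. If there exists a nonzero x ∈ ℝ^r such that ⟨β_i, x⟩ ≥ √((r-1)/r) · ‖β_i‖ · ‖x‖ for all i, then there exists an orthogonal matrix Q ∈ ℝ^{r×r} such that Q β_i has all entries nonnegative for every i. -/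
open Matrix BigOperators

/-!
A reflection maps `x` onto the diagonal direction `(1, …, 1)`. After it, the hypothesis says that
each `v = Q β_i` satisfies `√(r - 1) ‖v‖ ≤ ∑ k, v k`. If some `v j` were negative, Cauchy–Schwarz
on the remaining `r - 1` coordinates would give `∑ k, v k < ∑ k ≠ j, v k ≤ √(r - 1) ‖v‖`.
-/

theorem nonneg_of_sqrt_card_sub_one_mul_le_sum {ι : Type*} [Fintype ι] {v : ι → ℝ}
    (h : √((Fintype.card ι : ℝ) - 1) * √(∑ k, v k ^ 2) ≤ ∑ k, v k) (j : ι) : 0 ≤ v j := by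
  classical
  by_contra! hj
  set s := Finset.univ.erase j
  have hcard : (s.card : ℝ) = Fintype.card ι - 1 := by
    rw [Finset.card_erase_of_mem (Finset.mem_univ j), Finset.card_univ,
      Nat.cast_sub (Fintype.card_pos_iff.mpr ⟨j⟩), Nat.cast_one]
  have hrest : ∑ k ∈ s, v k ≤ √((Fintype.card ι : ℝ) - 1) * √(∑ k, v k ^ 2) :=
    calc ∑ k ∈ s, v k ≤ √(s.card * ∑ k ∈ s, v k ^ 2) :=
          (le_abs_self _).trans (Real.abs_le_sqrt sq_sum_le_card_mul_sum_sq)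
      _ = √(s.card : ℝ) * √(∑ k ∈ s, v k ^ 2) := Real.sqrt_mul (Nat.cast_nonneg _) _
      _ ≤ √((Fintype.card ι : ℝ) - 1) * √(∑ k, v k ^ 2) := by
          rw [hcard]
          gcongr
          exact s.subset_univ
  have hsplit := Finset.add_sum_erase Finset.univ v (Finset.mem_univ j)
  linarith

theorem Matrix.mulVec_dotProduct_mulVec_of_transpose_mul_self_eq_one {ι R : Type*} [Fintype ι]
    [DecidableEq ι] [CommSemiring R] {Q : Matrix ι ι R} (hQ : Qᵀ * Q = 1) (a b : ι → R) :
    Q *ᵥ a ⬝ᵥ Q *ᵥ b = a ⬝ᵥ b := by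
  rw [dotProduct_mulVec, ← mulVec_transpose, mulVec_mulVec, hQ, one_mulVec]

theorem Matrix.exists_transpose_mul_self_eq_one_mulVec_eq {ι : Type*} [Fintype ι] [DecidableEq ι]
    {x y : ι → ℝ} (h : ∑ i, x i ^ 2 = ∑ i, y i ^ 2) :
    ∃ Q : Matrix ι ι ℝ, Qᵀ * Q = 1 ∧ Q *ᵥ x = y := by
  have hnorm : ‖WithLp.toLp 2 x‖ = ‖WithLp.toLp 2 y‖ := by
    simp [EuclideanSpace.norm_eq, h]
  let f := Submodule.reflection (ℝ ∙ (WithLp.toLp 2 x - WithLp.toLp 2 y))ᗮ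
  let b := EuclideanSpace.basisFun ι ℝ
  refine ⟨f.toMatrix b.toBasis b.toBasis,
    (mem_orthogonalGroup_iff' ι ℝ).mp (f.toMatrix_mem_unitaryGroup b b), ?_⟩
  calc f.toMatrix b.toBasis b.toBasis *ᵥ x = b.toBasis.repr (f (WithLp.toLp 2 x)) :=
        LinearMap.toMatrix_mulVec_repr b.toBasis b.toBasis f.toLinearMap (WithLp.toLp 2 x)
    _ = y := by rw [Submodule.reflection_sub hnorm]; rfl

theorem stmt_3 (r n : ℕ) (β : Fin n → Fin r → ℝ) (x : Fin r → ℝ) (hx : x ≠ 0)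
    (h : ∀ i, Real.sqrt (((r : ℝ) - 1) / r) * Real.sqrt (∑ j, β i j ^ 2) *
      Real.sqrt (∑ j, x j ^ 2) ≤ ∑ j, β i j * x j) :
    ∃ Q : Matrix (Fin r) (Fin r) ℝ, Qᵀ * Q = 1 ∧ ∀ i j, 0 ≤ Q.mulVec (β i) j := by
  obtain ⟨j₀, hj₀⟩ := Function.ne_iff.mp hx
  have hr : (0 : ℝ) < r := by exact_mod_cast j₀.pos
  have hx2 : 0 < ∑ j, x j ^ 2 :=
    Finset.sum_pos' (fun _ _ => sq_nonneg _) ⟨j₀, Finset.mem_univ _, sq_pos_of_ne_zero hj₀⟩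
  set N := √(∑ j, x j ^ 2)
  set c := N / √r
  have hc : 0 < c := by positivity
  have hdiag : ∑ j, x j ^ 2 = ∑ _ : Fin r, c ^ 2 := by
    rw [Finset.sum_const, Finset.card_univ, Fintype.card_fin, nsmul_eq_mul, div_pow,
      Real.sq_sqrt hr.le, Real.sq_sqrt hx2.le]
    field_simp
  obtain ⟨Q, hQ, hQx⟩ := exists_transpose_mul_self_eq_one_mulVec_eq hdiag
  refine ⟨Q, hQ, fun i => nonneg_of_sqrt_card_sub_one_mul_le_sum ?_⟩
  have hnorm : ∑ k, (Q *ᵥ β i) k ^ 2 = ∑ k, β i k ^ 2 := by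
    simpa [dotProduct, sq] using
      mulVec_dotProduct_mulVec_of_transpose_mul_self_eq_one hQ (β i) (β i)
  have hsum : (∑ k, (Q *ᵥ β i) k) * c = ∑ k, β i k * x k := by
    simpa [hQx, dotProduct, Finset.sum_mul] using
      mulVec_dotProduct_mulVec_of_transpose_mul_self_eq_one hQ (β i) x
  rw [Fintype.card_fin, hnorm]
  refine le_of_mul_le_mul_right ?_ hc
  calc √((r : ℝ) - 1) * √(∑ k, β i k ^ 2) * c
      = √(((r : ℝ) - 1) / r) * √(∑ k, β i k ^ 2) * N := by rw [Real.sqrt_div' _ hr.le]; ring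
    _ ≤ ∑ k, β i k * x k := h i
    _ = (∑ k, (Q *ᵥ β i) k) * c := hsum.symm
end

section
/- Every doubly nonnegative n×n matrix of rank 2 is completely positive with cp-rank equal to 2. -/
open Matrix BigOperators

def Matrix.IsCP {n : Type*} [Fintype n] (A : Matrix n n ℝ) : Prop :=
  ∃ (m : ℕ) (B : Matrix (Fin m) n ℝ), (∀ i j, 0 ≤ B i j) ∧ A = Bᵀ * B

noncomputable def Matrix.cpRank {n : Type*} [Fintype n] (A : Matrix n n ℝ) : ℕ :=
  sInf {m | ∃ B : Matrix (Fin m) n ℝ, (∀ i j, 0 ≤ B i j) ∧ A = Bᵀ * B}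

/-!
A positive semidefinite matrix of rank 2 is the Gram matrix `Cᵀ * C` of the columns of a real
`2 × n` matrix, i.e. of `n` vectors in the plane `ℂ`, and entrywise nonnegativity says that these
vectors have pairwise nonnegative inner products. Such vectors fit in a closed quarter-plane:
rotating a nonzero one onto the positive real axis puts all of them in the right half-plane, and
then rotating the one of least argument onto the positive real axis puts all of them in the first
quadrant. Their coordinates form a nonnegative factor with two rows, and no factor `B` with
`A = Bᵀ * B` has fewer than `rank A` rows.
-/

namespace Matrix

open scoped ComplexOrder

variable {𝕜 : Type*} [RCLike 𝕜] {m m' n : Type*} [Fintype m] [Fintype m']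

theorem conjTranspose_submatrix_mul_submatrix_self (C : Matrix m n 𝕜) {f : m' → m}
    (hf : f.Injective) (hC : ∀ i ∉ Set.range f, C i = 0) :
    (C.submatrix f id)ᴴ * C.submatrix f id = Cᴴ * C := by
  ext j l
  simp only [mul_apply, conjTranspose_apply, submatrix_apply, id]
  exact Fintype.sum_of_injective f hf _ _ (fun i hi => by simp [hC i hi]) fun _ => rfl

theorem PosSemidef.exists_eq_conjTranspose_mul_of_rank_eq [Fintype n] [DecidableEq n]
    {A : Matrix n n 𝕜} (hA : A.PosSemidef) {r : ℕ} (hr : A.rank = r) :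
    ∃ C : Matrix (Fin r) n 𝕜, A = Cᴴ * C := by
  set U : Matrix n n 𝕜 := (hA.1.eigenvectorUnitary : Matrix n n 𝕜)
  set ev := hA.1.eigenvalues with hev
  set D : Matrix n n 𝕜 := diagonal fun i => (√(ev i) : 𝕜)
  have hDD : Dᴴ * D = diagonal (RCLike.ofReal ∘ ev) := by
    rw [diagonal_conjTranspose, diagonal_mul_diagonal]
    congr 1; ext i
    rw [Pi.star_apply, Function.comp_apply, RCLike.star_def, RCLike.conj_ofReal,
      ← RCLike.ofReal_mul, Real.mul_self_sqrt (hA.eigenvalues_nonneg i)]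
  have hA' : A = (D * Uᴴ)ᴴ * (D * Uᴴ) := by
    conv_lhs => rw [hA.1.spectral_theorem, ← hev, ← hDD]
    simp only [Unitary.conjStarAlgAut_apply, conjTranspose_mul, conjTranspose_conjTranspose,
      Matrix.mul_assoc, U, star_eq_conjTranspose]
  obtain ⟨e⟩ : Nonempty (Fin r ≃ {i // ev i ≠ 0}) := by
    rw [← Fintype.card_eq, Fintype.card_fin, ← hA.1.rank_eq_card_non_zero_eigs, hr]
  -- the rows of `D * Uᴴ` at the zero eigenvalues vanish and can be dropped
  refine ⟨(D * Uᴴ).submatrix (Subtype.val ∘ e) id, ?_⟩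
  rw [conjTranspose_submatrix_mul_submatrix_self _ (Subtype.val_injective.comp e.injective), hA']
  intro i hi
  have hev0 : ev i = 0 := by
    by_contra h; exact hi ⟨e.symm ⟨i, h⟩, by simp⟩
  ext j; simp [D, diagonal_mul, hev0]

end Matrix

namespace Complex

open scoped InnerProductSpace

theorem circleExp_mul (θ : ℝ) (z : ℂ) :
    (Circle.exp θ : ℂ) * z = ‖z‖ * exp ((arg z + θ : ℝ) * I) := by
  conv_lhs => rw [← norm_mul_exp_arg_mul_I z]
  rw [Circle.coe_exp, mul_left_comm, ← exp_add]
  push_cast; ring_nf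

theorem real_inner_eq_norm_mul_re_circleExp_neg_arg_mul (x y : ℂ) :
    ⟪x, y⟫_ℝ = ‖x‖ * (Circle.exp (-arg x) * y).re := by
  have hx : (Circle.exp (-arg x) : ℂ) * x = ‖x‖ := by
    rw [circleExp_mul, add_neg_cancel, ofReal_zero, zero_mul, exp_zero, mul_one]
  rw [← (rotation (Circle.exp (-arg x))).inner_map_map, rotation_apply, rotation_apply, hx,
    Complex.inner, conj_ofReal, re_mul_ofReal, mul_comm]

theorem exists_circle_mul_re_nonneg_im_nonneg_of_re_nonneg {ι : Type*} [Finite ι] (z : ι → ℂ)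
    (hre : ∀ j, 0 ≤ (z j).re) (h : ∀ j l, 0 ≤ ⟪z j, z l⟫_ℝ) :
    ∃ a : Circle, ∀ j, 0 ≤ (a * z j).re ∧ 0 ≤ (a * z j).im := by
  cases isEmpty_or_nonempty ι
  · exact ⟨1, isEmptyElim⟩
  obtain ⟨j₁, hj₁⟩ := Finite.exists_min fun j => arg (z j)
  refine ⟨Circle.exp (-arg (z j₁)), fun j => ⟨?_, ?_⟩⟩
  · rcases eq_or_ne (z j₁) 0 with h0 | h0
    · simpa [h0] using hre j
    · exact (mul_nonneg_iff_of_pos_left (norm_pos_iff.2 h0)).1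
        (real_inner_eq_norm_mul_re_circleExp_neg_arg_mul _ _ ▸ h j₁ j)
  · have harg_le := (abs_le.1 (abs_arg_le_pi_div_two_iff.2 (hre j))).2
    have harg_ge := (abs_le.1 (abs_arg_le_pi_div_two_iff.2 (hre j₁))).1
    rw [circleExp_mul, im_ofReal_mul, exp_ofReal_mul_I_im]
    exact mul_nonneg (norm_nonneg _)
      (Real.sin_nonneg_of_nonneg_of_le_pi (by linarith [hj₁ j]) (by linarith))

theorem exists_circle_mul_re_nonneg_im_nonneg {ι : Type*} [Finite ι] (z : ι → ℂ)
    (h : ∀ j l, 0 ≤ ⟪z j, z l⟫_ℝ) :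
    ∃ a : Circle, ∀ j, 0 ≤ (a * z j).re ∧ 0 ≤ (a * z j).im := by
  by_cases! hz : ∀ j, z j = 0
  · exact ⟨1, fun j => by simp [hz j]⟩
  obtain ⟨j₀, hj₀⟩ := hz
  set b := Circle.exp (-arg (z j₀))
  have hre : ∀ j, 0 ≤ (b * z j).re := fun j =>
    (mul_nonneg_iff_of_pos_left (norm_pos_iff.2 hj₀)).1
      (real_inner_eq_norm_mul_re_circleExp_neg_arg_mul _ _ ▸ h j₀ j)
  have hinner : ∀ j l, 0 ≤ ⟪b * z j, b * z l⟫_ℝ := fun j l => by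
    simpa only [← rotation_apply, LinearIsometryEquiv.inner_map_map] using h j l
  obtain ⟨a, ha⟩ := exists_circle_mul_re_nonneg_im_nonneg_of_re_nonneg _ hre hinner
  exact ⟨a * b, fun j => by simpa only [Circle.coe_mul, mul_assoc] using ha j⟩

end Complex

namespace Matrix

open scoped InnerProductSpace

variable {n : Type*}

theorem transpose_mul_self_apply_eq_inner_of_fin_two (C : Matrix (Fin 2) n ℝ) (j l : n) :
    (Cᵀ * C) j l = ⟪(⟨C 0 j, C 1 j⟩ : ℂ), ⟨C 0 l, C 1 l⟩⟫_ℝ := by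
  simp only [mul_apply, transpose_apply, Fin.sum_univ_two, Complex.inner, Complex.mul_re,
    Complex.conj_re, Complex.conj_im]
  ring

variable [Fintype n]

theorem exists_nonneg_transpose_mul_self_eq_of_fin_two (C : Matrix (Fin 2) n ℝ)
    (h : ∀ j l, 0 ≤ (Cᵀ * C) j l) :
    ∃ B : Matrix (Fin 2) n ℝ, (∀ i j, 0 ≤ B i j) ∧ Bᵀ * B = Cᵀ * C := by
  simp only [transpose_mul_self_apply_eq_inner_of_fin_two] at h
  obtain ⟨a, ha⟩ := Complex.exists_circle_mul_re_nonneg_im_nonneg _ h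
  set w : n → ℂ := fun j => a * ⟨C 0 j, C 1 j⟩
  refine ⟨of ![fun j => (w j).re, fun j => (w j).im], fun i j => ?_, ?_⟩
  · fin_cases i
    exacts [(ha j).1, (ha j).2]
  · ext j l
    simp only [transpose_mul_self_apply_eq_inner_of_fin_two, of_apply, cons_val_zero, cons_val_one,
      Complex.eta, w, ← rotation_apply, LinearIsometryEquiv.inner_map_map]

theorem cpRank_le {A : Matrix n n ℝ} {m : ℕ} (B : Matrix (Fin m) n ℝ)
    (hB : ∀ i j, 0 ≤ B i j) (hA : A = Bᵀ * B) : A.cpRank ≤ m :=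
  Nat.sInf_le ⟨B, hB, hA⟩

theorem rank_le_of_eq_transpose_mul {A : Matrix n n ℝ} {m : ℕ} (B : Matrix (Fin m) n ℝ)
    (hA : A = Bᵀ * B) : A.rank ≤ m :=
  calc A.rank ≤ B.rank := hA ▸ rank_mul_le_right _ _
    _ ≤ m := (rank_le_card_height B).trans (Fintype.card_fin m).le

theorem IsCP.rank_le_cpRank {A : Matrix n n ℝ} (hA : A.IsCP) : A.rank ≤ A.cpRank := by
  obtain ⟨m, hm⟩ := hA
  obtain ⟨B, -, hB⟩ : A.cpRank ∈ {m | ∃ B : Matrix (Fin m) n ℝ, (∀ i j, 0 ≤ B i j) ∧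
      A = Bᵀ * B} :=
    Nat.sInf_mem ⟨m, hm⟩
  exact rank_le_of_eq_transpose_mul B hB

end Matrix

theorem stmt_7 (n : ℕ) (A : Matrix (Fin n) (Fin n) ℝ)
    (hnn : ∀ i j, 0 ≤ A i j) (hpsd : A.PosSemidef) (hrank : A.rank = 2) :
    A.IsCP ∧ A.cpRank = 2 := by
  obtain ⟨C, hC⟩ := hpsd.exists_eq_conjTranspose_mul_of_rank_eq hrank
  rw [conjTranspose_eq_transpose_of_trivial] at hC
  obtain ⟨B, hB, hBC⟩ := exists_nonneg_transpose_mul_self_eq_of_fin_two C (hC ▸ hnn)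
  have hAB : A = Bᵀ * B := hC.trans hBC.symm
  have hcp : A.IsCP := ⟨2, B, hB, hAB⟩
  exact ⟨hcp, le_antisymm (cpRank_le B hB hAB) (hrank ▸ hcp.rank_le_cpRank)⟩
end

section
/- Let n ≥ 4 and let A = [a_{ij}] be an n×n completely positive matrix whose associated graph G(A) is the n-cycle, with nonzero off-diagonal entries exactly a_{i,i+1} (indices mod n). Then a_{12} + a_{23} + ⋯ + a_{n−1,n} + a_{n1} ≤ (1/2)(a_{11} + ⋯ + a_{nn}). -/
open Matrix BigOperators

theorem stmt_8 (n : ℕ) (hn : 4 ≤ n) (A : Matrix (Fin n) (Fin n) ℝ) (hcp : A.IsCP)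
    (hgraph : ∀ i j : Fin n, i ≠ j →
      (A i j ≠ 0 ↔ (j = i + ⟨1, by omega⟩ ∨ i = j + ⟨1, by omega⟩))) :
    ∑ i, A i (i + ⟨1, by omega⟩) ≤ (∑ i, A i i) / 2 := by
  haveI : NeZero n := ⟨by omega⟩
  obtain ⟨m, B, hB, hA⟩ := hcp
  set e : Fin n := ⟨1, by omega⟩ with he
  have hentry : ∀ i j, A i j = ∑ k, B k i * B k j := by
    intro i j
    rw [hA]; simp [Matrix.mul_apply, Matrix.transpose_apply]
  have hval1 : e.val = 1 := rfl
  have he0 : e ≠ 0 := by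
    intro h
    have := congrArg Fin.val h
    rw [hval1, Fin.val_zero] at this
    exact one_ne_zero this
  have hval2 : (e + e).val = 2 := by
    rw [Fin.val_add, hval1, Nat.mod_eq_of_lt (by omega)]
  have he2 : e + e ≠ 0 := by
    intro h
    have := congrArg Fin.val h
    rw [hval2, Fin.val_zero] at this
    exact two_ne_zero this
  have he3 : e + e + e ≠ 0 := by
    intro h
    have := congrArg Fin.val h
    rw [Fin.val_add, hval2, hval1, Nat.mod_eq_of_lt (by omega), Fin.val_zero] at this
    omega
  have hne : ∀ (a b : Fin n), b ≠ 0 → a ≠ a + b := by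
    intro a b hb h
    exact hb (left_eq_add.mp h)
  have hzero : ∀ (i j : Fin n), i ≠ j → j ≠ i + e → i ≠ j + e →
      ∀ k, B k i * B k j = 0 := by
    intro i j hij h1 h2 k
    have hAij : A i j = 0 := by
      by_contra h
      rcases (hgraph i j hij).1 h with h' | h'
      · exact h1 h'
      · exact h2 h'
    have hsum : ∑ k, B k i * B k j = 0 := by rw [← hentry]; exact hAij
    exact (Finset.sum_eq_zero_iff_of_nonneg
      (fun k _ => mul_nonneg (hB k i) (hB k j))).mp hsum k (Finset.mem_univ k)
  have key : ∀ k : Fin m, ∑ i, B k i * B k (i + e) ≤ (∑ i, B k i * B k i) / 2 := by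
    intro k
    have hRHS : 0 ≤ ∑ i, B k i * B k i :=
      Finset.sum_nonneg fun i _ => mul_nonneg (hB k i) (hB k i)
    by_cases h : ∀ i, B k i * B k (i + e) = 0
    · rw [Finset.sum_eq_zero fun i _ => h i]
      linarith
    · push_neg at h
      obtain ⟨j, hj⟩ := h
      have hj1 : B k j ≠ 0 := fun h' => hj (by rw [h', zero_mul])
      have hj2 : B k (j + e) ≠ 0 := fun h' => hj (by rw [h', mul_zero])
      have hothers : ∀ i, i ≠ j → B k i * B k (i + e) = 0 := by
        intro i hij
        by_contra h0
        have hi1 : B k i ≠ 0 := fun h' => h0 (by rw [h', zero_mul])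
        have hi2 : B k (i + e) ≠ 0 := fun h' => h0 (by rw [h', mul_zero])
        by_cases hc1 : i + e = j
        · -- support contains i and i+e+e = j+e, non-adjacent
          have : B k i * B k (i + e + e) = 0 := by
            apply hzero
            · have := hne i (e + e) he2
              rwa [← add_assoc] at this
            · intro h'; exact hne (i + e) e he0 h'.symm
            · intro h'
              have := hne i (e + e + e) he3
              rw [← add_assoc, ← add_assoc] at this
              exact this h'
          rw [hc1] at this
          rcases mul_eq_zero.mp this with h' | h'
          · exact hi1 h'
          · exact hj2 h'
        · by_cases hc2 : j + e = i
          · have : B k j * B k (j + e + e) = 0 := by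
              apply hzero
              · have := hne j (e + e) he2
                rwa [← add_assoc] at this
              · intro h'; exact hne (j + e) e he0 h'.symm
              · intro h'
                have := hne j (e + e + e) he3
                rw [← add_assoc, ← add_assoc] at this
                exact this h'
            rw [hc2] at this
            rcases mul_eq_zero.mp this with h' | h'
            · exact hj1 h'
            · exact hi2 h'
          · have : B k i * B k j = 0 := by
              apply hzero i j hij
              · intro h'; exact hc1 h'.symm
              · intro h'; exact hc2 (by rw [h'])
            rcases mul_eq_zero.mp this with h' | h'
            · exact hi1 h'
            · exact hj1 h'
      have hsingle : ∑ i, B k i * B k (i + e) = B k j * B k (j + e) :=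
        Finset.sum_eq_single j (fun i _ hi => hothers i hi) (by simp)
      rw [hsingle]
      have hjj : j ≠ j + e := hne j e he0
      have h2 : B k j * B k j + B k (j + e) * B k (j + e) ≤ ∑ i, B k i * B k i := by
        have hsub : ({j, j + e} : Finset (Fin n)) ⊆ Finset.univ := Finset.subset_univ _
        have := Finset.sum_le_sum_of_subset_of_nonneg hsub
          (fun i _ _ => mul_nonneg (hB k i) (hB k i))
        rwa [Finset.sum_pair hjj] at this
      nlinarith [sq_nonneg (B k j - B k (j + e))]
  calc ∑ i, A i (i + e) = ∑ i, ∑ k, B k i * B k (i + e) := by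
        exact Finset.sum_congr rfl fun i _ => hentry i (i + e)
    _ = ∑ k, ∑ i, B k i * B k (i + e) := Finset.sum_comm
    _ ≤ ∑ k, (∑ i, B k i * B k i) / 2 := Finset.sum_le_sum fun k _ => key k
    _ = (∑ k, ∑ i, B k i * B k i) / 2 := by rw [Finset.sum_div]
    _ = (∑ i, A i i) / 2 := by
        rw [Finset.sum_comm]
        congr 1
        exact Finset.sum_congr rfl fun i _ => (hentry i i).symm
end

section
/- The 4×4 matrix A with diagonal entries 2, entries a_{12}=a_{23}=a_{34}=a_{14}=1 (and symmetric), and zeros elsewhere, is doubly nonnegative of rank 3 but is not completely positive with cp-rank 3; in fact any CP factorization A = B^T B with B ≥ 0 requires B to have at least 4 rows. -/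
open Matrix BigOperators

/-!
Write `A = Eᵀ E` with `E ≥ 0` the edge–vertex incidence matrix of the 4-cycle; this
gives nonnegativity and positive semidefiniteness, and `A = Cᵀ C` with `C` having three mutually
orthogonal rows gives rank 3. For the lower bound, in any factorization `A = Bᵀ B` with `B ≥ 0`
the entry `A j k` vanishes exactly when no row of `B` is positive in both columns `j` and `k`.
So each of the four edges `{t, t + 1}` of the cycle is witnessed by some row, and no row can
witness two distinct edges, since together they always cover a diagonal `{a, a + 2}`, where
`A` vanishes. Hence `B` has at least four rows, and so does any optimal factorization.
-/

namespace Matrix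

section Nonneg

variable {m n : Type*} [Fintype m] {B : Matrix m n ℝ}

theorem transpose_mul_self_apply_nonneg (hB : ∀ i j, 0 ≤ B i j) (j k : n) :
    0 ≤ (Bᵀ * B) j k :=
  Finset.sum_nonneg fun i _ => mul_nonneg (hB i j) (hB i k)

theorem transpose_mul_self_apply_pos (hB : ∀ i j, 0 ≤ B i j) {i : m} {j k : n}
    (hj : 0 < B i j) (hk : 0 < B i k) : 0 < (Bᵀ * B) j k :=
  Finset.sum_pos' (fun i _ => mul_nonneg (hB i j) (hB i k)) ⟨i, Finset.mem_univ i, mul_pos hj hk⟩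

theorem exists_pos_pos_of_transpose_mul_self_apply_pos (hB : ∀ i j, 0 ≤ B i j) {j k : n}
    (h : 0 < (Bᵀ * B) j k) : ∃ i, 0 < B i j ∧ 0 < B i k := by
  obtain ⟨i, -, hi⟩ := Finset.exists_lt_of_sum_lt (f := 0) (g := fun i => B i j * B i k)
    (by simpa [mul_apply] using h)
  exact ⟨i, pos_of_mul_pos_left hi (hB i k), pos_of_mul_pos_right hi (hB i j)⟩

end Nonneg

theorem rank_transpose_mul_self_of_isUnit {m n : Type*} [Fintype m] [Fintype n] [DecidableEq m]
    (C : Matrix m n ℝ) (h : IsUnit (C * Cᵀ)) : (Cᵀ * C).rank = Fintype.card m := by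
  rw [rank_transpose_mul_self]
  refine le_antisymm C.rank_le_card_height ?_
  calc Fintype.card m = (C * Cᵀ).rank := (rank_of_isUnit _ h).symm
    _ ≤ C.rank := rank_mul_le_left _ _

theorem IsCP.le_cpRank {n : Type*} [Fintype n] {A : Matrix n n ℝ} (hA : A.IsCP) {r : ℕ}
    (h : ∀ (m : ℕ) (B : Matrix (Fin m) n ℝ), (∀ i j, 0 ≤ B i j) → A = Bᵀ * B → r ≤ m) :
    r ≤ A.cpRank := by
  obtain ⟨m, B, hB, hAB⟩ := hA
  exact le_csInf ⟨m, B, hB, hAB⟩ fun k ⟨B, hB, hAB⟩ => h k B hB hAB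

end Matrix

def cycleMatrix : Matrix (Fin 4) (Fin 4) ℝ := !![2,1,0,1; 1,2,1,0; 0,1,2,1; 1,0,1,2]

def cycleIncidence : Matrix (Fin 4) (Fin 4) ℝ := !![1,1,0,0; 0,1,1,0; 0,0,1,1; 1,0,0,1]

def cycleRankFactor : Matrix (Fin 3) (Fin 4) ℝ := !![1,1,1,1; 1,0,-1,0; 0,1,0,-1]

theorem cycleIncidence_nonneg (i j : Fin 4) : 0 ≤ cycleIncidence i j := by
  fin_cases i <;> fin_cases j <;> norm_num [cycleIncidence]

theorem cycleMatrix_eq_transpose_mul_cycleIncidence :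
    cycleMatrix = cycleIncidenceᵀ * cycleIncidence := by
  ext i j
  fin_cases i <;> fin_cases j <;>
    norm_num [cycleMatrix, cycleIncidence, mul_apply, Fin.sum_univ_succ]

theorem cycleMatrix_isCP : cycleMatrix.IsCP :=
  ⟨4, cycleIncidence, cycleIncidence_nonneg, cycleMatrix_eq_transpose_mul_cycleIncidence⟩

theorem cycleMatrix_eq_transpose_mul_cycleRankFactor :
    cycleMatrix = cycleRankFactorᵀ * cycleRankFactor := by
  ext i j
  fin_cases i <;> fin_cases j <;>
    norm_num [cycleMatrix, cycleRankFactor, mul_apply, Fin.sum_univ_succ]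

theorem cycleRankFactor_mul_transpose :
    cycleRankFactor * cycleRankFactorᵀ = diagonal ![4, 2, 2] := by
  ext i j
  fin_cases i <;> fin_cases j <;>
    norm_num [cycleRankFactor, mul_apply, Fin.sum_univ_succ]

theorem cycleMatrix_rank : cycleMatrix.rank = 3 := by
  rw [cycleMatrix_eq_transpose_mul_cycleRankFactor, rank_transpose_mul_self_of_isUnit,
    Fintype.card_fin]
  rw [cycleRankFactor_mul_transpose, isUnit_diagonal, Pi.isUnit_iff]
  intro i
  fin_cases i <;> norm_num

theorem cycleMatrix_apply_add_one (t : Fin 4) : cycleMatrix t (t + 1) = 1 := by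
  fin_cases t <;> rfl

theorem cycleMatrix_apply_add_two (a : Fin 4) : cycleMatrix a (a + 2) = 0 := by
  fin_cases a <;> rfl

theorem exists_add_two_of_ne_fin_four (t s : Fin 4) (h : t ≠ s) :
    ∃ a, (a = t ∨ a = t + 1) ∧ (a + 2 = s ∨ a + 2 = s + 1) := by
  revert t s; decide

theorem four_le_of_cycleMatrix_eq {m : ℕ} (B : Matrix (Fin m) (Fin 4) ℝ)
    (hB : ∀ i j, 0 ≤ B i j) (hA : cycleMatrix = Bᵀ * B) : 4 ≤ m := by
  have hedge (t : Fin 4) : ∃ i, 0 < B i t ∧ 0 < B i (t + 1) :=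
    exists_pos_pos_of_transpose_mul_self_apply_pos hB
      (by rw [← hA, cycleMatrix_apply_add_one]; exact one_pos)
  choose row hrow using hedge
  have hcover (t a : Fin 4) (ha : a = t ∨ a = t + 1) : 0 < B (row t) a := by
    rcases ha with rfl | rfl
    exacts [(hrow a).1, (hrow t).2]
  have hinj : Function.Injective row := by
    intro t s hts
    by_contra hne
    obtain ⟨a, hat, has⟩ := exists_add_two_of_ne_fin_four t s hne
    have hpos := transpose_mul_self_apply_pos hB (hcover t a hat) (hts ▸ hcover s _ has)
    rw [← hA, cycleMatrix_apply_add_two] at hpos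
    exact hpos.false
  simpa using Fintype.card_le_of_injective row hinj

theorem stmt_10 :
    let A : Matrix (Fin 4) (Fin 4) ℝ := !![2,1,0,1; 1,2,1,0; 0,1,2,1; 1,0,1,2]
    (∀ i j, 0 ≤ A i j) ∧ A.PosSemidef ∧ A.rank = 3 ∧ A.cpRank ≠ 3 ∧
      ∀ (m : ℕ) (B : Matrix (Fin m) (Fin 4) ℝ),
        (∀ i j, 0 ≤ B i j) → A = Bᵀ * B → 4 ≤ m := by
  intro A
  have hA : A = cycleIncidenceᵀ * cycleIncidence := cycleMatrix_eq_transpose_mul_cycleIncidence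
  have hcp : 4 ≤ A.cpRank := cycleMatrix_isCP.le_cpRank fun _ => four_le_of_cycleMatrix_eq
  refine ⟨?_, ?_, cycleMatrix_rank, by omega, fun _ => four_le_of_cycleMatrix_eq⟩ <;> rw [hA]
  · exact transpose_mul_self_apply_nonneg cycleIncidence_nonneg
  · simpa using posSemidef_conjTranspose_mul_self cycleIncidence
end

section
/- Every 3×3 doubly nonnegative matrix of full rank 3 is completely positive with cp-rank 3. -/
open Matrix BigOperators

/-!
A positive semidefinite matrix of full rank is positive definite, so it has a Cholesky factorization
`A = Rᵀ * R` with `R` upper triangular. The first row of `R` is `(√a₁₁, a₁₂/√a₁₁, a₁₃/√a₁₁)` and the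
rest of `R` factors the Schur complement of `a₁₁`, whose off-diagonal entry is `a₂₃ - a₁₂a₁₃/a₁₁`;
so `R ≥ 0` as soon as `a₁₂a₁₃ ≤ a₁₁a₂₃`. After permuting the indices this pivot condition holds for
some choice of the first index: if it failed for all three, multiplying the failures would give
`a₁₁a₂₂a₃₃ < a₁₂a₁₃a₂₃`, against the product of the inequalities `aᵢⱼ² ≤ aᵢᵢaⱼⱼ`.
Three rows are optimal because `rank (Bᵀ * B) ≤ rank B` is at most the number of rows of `B`.
-/

lemma exists_nonneg_cholesky_fin_two {d e f : ℝ} (hd : 0 < d) (he : 0 ≤ e)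
    (hdet : e * e ≤ d * f) :
    ∃ s t u : ℝ, 0 ≤ s ∧ 0 ≤ t ∧ 0 ≤ u ∧ s * s = d ∧ s * t = e ∧ t * t + u * u = f := by
  set s := √d
  have hs : 0 < s := Real.sqrt_pos.mpr hd
  have hss : s * s = d := Real.mul_self_sqrt hd.le
  set t := e / s
  have hst : s * t = e := mul_div_cancel₀ e hs.ne'
  have hf : 0 ≤ f - t * t := by
    have : d * (f - t * t) = d * f - e * e := by rw [← hss, ← hst]; ring
    exact nonneg_of_mul_nonneg_right (by linarith) hd
  refine ⟨s, t, √(f - t * t), hs.le, div_nonneg he hs.le, Real.sqrt_nonneg _, hss, hst, ?_⟩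
  rw [Real.mul_self_sqrt hf]
  ring

lemma mul_le_mul_or_of_mul_self_le {a b c d e f : ℝ} (ha : 0 ≤ a) (hb : 0 ≤ b) (hc : 0 ≤ c)
    (hd : 0 ≤ d) (he : 0 ≤ e) (hf : 0 ≤ f)
    (hbd : b * b ≤ a * d) (hcf : c * c ≤ a * f) (hef : e * e ≤ d * f) :
    b * c ≤ a * e ∨ b * e ≤ d * c ∨ e * c ≤ f * b := by
  by_contra! ⟨h₁, h₂, h₃⟩
  have hlt : (a * d * f) * (b * c * e) < (b * c * e) * (b * c * e) :=
    calc (a * d * f) * (b * c * e) = (a * e) * (d * c) * (f * b) := by ring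
      _ < (b * c) * (b * e) * (e * c) := by gcongr
      _ = (b * c * e) * (b * c * e) := by ring
  have hle : (b * c * e) * (b * c * e) ≤ (a * d * f) * (a * d * f) :=
    calc (b * c * e) * (b * c * e) = (b * b) * (c * c) * (e * e) := by ring
      _ ≤ (a * d) * (a * f) * (d * f) := by gcongr
      _ = (a * d * f) * (a * d * f) := by ring
  have hadf : a * d * f < b * c * e := lt_of_mul_lt_mul_right hlt (by positivity)
  have := mul_self_lt_mul_self (by positivity) hadf
  linarith

namespace Matrix

lemma isUnit_of_rank_eq_card {n K : Type*} [Fintype n] [DecidableEq n] [Field K]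
    {A : Matrix n n K} (hA : A.rank = Fintype.card n) : IsUnit A := by
  refine mulVec_surjective_iff_isUnit.mp fun y => ?_
  have hrange : LinearMap.range A.mulVecLin = ⊤ :=
    Submodule.eq_top_of_finrank_eq (by rw [← rank, hA, Module.finrank_fintype_fun_eq_card])
  exact LinearMap.range_eq_top.mp hrange y

lemma PosDef.mul_self_apply_lt {n : Type*} [Fintype n] {A : Matrix n n ℝ} (hA : A.PosDef)
    {i j : n} (hij : i ≠ j) : A i j * A i j < A i i * A j j := by
  have hinj : Function.Injective ![i, j] := by
    rw [show ![i, j] = Fin.cons i ![j] from rfl, Fin.cons_injective_iff]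
    exact ⟨by simpa using hij, Function.injective_of_subsingleton _⟩
  have hji : A j i = A i j := by simpa using hA.1.apply i j
  have h := (hA.submatrix hinj).det_pos
  rw [det_fin_two] at h
  simpa [hji] using h

variable {n : Type*}

def HasCPFactorization (A : Matrix n n ℝ) (m : ℕ) : Prop :=
  ∃ B : Matrix (Fin m) n ℝ, (∀ i j, 0 ≤ B i j) ∧ A = Bᵀ * B

namespace HasCPFactorization

variable {A : Matrix n n ℝ} {m : ℕ}

lemma isCP [Fintype n] (h : A.HasCPFactorization m) : A.IsCP := ⟨m, h⟩

lemma rank_le [Fintype n] (h : A.HasCPFactorization m) : A.rank ≤ m := by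
  obtain ⟨B, -, hAB⟩ := h
  rw [hAB]
  exact (rank_mul_le_right Bᵀ B).trans (B.rank_le_card_height.trans_eq (Fintype.card_fin m))

lemma cpRank_eq [Fintype n] (h : A.HasCPFactorization m) (hrank : A.rank = m) : A.cpRank = m :=
  le_antisymm (Nat.sInf_le h)
    (le_csInf ⟨m, h⟩ fun k hk => hrank ▸ (show A.HasCPFactorization k from hk).rank_le)

lemma of_submatrix_equiv (e : n ≃ n) (h : (A.submatrix e e).HasCPFactorization m) :
    A.HasCPFactorization m := by
  obtain ⟨B, hB, hAB⟩ := h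
  refine ⟨B.submatrix id e.symm, fun i j => hB _ _, ?_⟩
  rw [transpose_submatrix, ← submatrix_mul _ _ _ id _ Function.bijective_id, ← hAB,
    submatrix_submatrix]
  simp

end HasCPFactorization

lemma upperTriangular_transpose_mul_self_fin_three (p q r s t u : ℝ) :
    (!![p, q, r; 0, s, t; 0, 0, u])ᵀ * !![p, q, r; 0, s, t; 0, 0, u] =
      !![p * p, p * q, p * r; p * q, q * q + s * s, q * r + s * t;
        p * r, q * r + s * t, r * r + t * t + u * u] := by
  ext i j
  fin_cases i <;> fin_cases j <;> simp [mul_apply, Fin.sum_univ_three] <;> ring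

lemma hasCPFactorization_fin_three_of_pivot {a b c d e f : ℝ} (ha : 0 < a) (hb : 0 ≤ b)
    (hc : 0 ≤ c) (hbd : b * b < a * d) (hpivot : b * c ≤ a * e)
    (hdet : 0 ≤ (!![a, b, c; b, d, e; c, e, f]).det) :
    (!![a, b, c; b, d, e; c, e, f]).HasCPFactorization 3 := by
  set p := √a
  have hp : 0 < p := Real.sqrt_pos.mpr ha
  have hpp : p * p = a := Real.mul_self_sqrt ha.le
  set q := b / p
  set r := c / p
  have hpq : p * q = b := mul_div_cancel₀ b hp.ne'
  have hpr : p * r = c := mul_div_cancel₀ c hp.ne'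
  -- `!![s, t; 0, u]` factors the Schur complement of `a`
  obtain ⟨s, t, u, hs, ht, hu, hss, hst, htu⟩ :
      ∃ s t u : ℝ, 0 ≤ s ∧ 0 ≤ t ∧ 0 ≤ u ∧ s * s = d - q * q ∧ s * t = e - q * r ∧
        t * t + u * u = f - r * r := by
    refine exists_nonneg_cholesky_fin_two ?_ ?_ ?_
    · have : a * (d - q * q) = a * d - b * b := by rw [← hpp, ← hpq]; ring
      exact pos_of_mul_pos_right (by linarith) ha.le
    · have : a * (e - q * r) = a * e - b * c := by rw [← hpp, ← hpq, ← hpr]; ring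
      exact nonneg_of_mul_nonneg_right (by linarith) ha
    · have : a * a * ((d - q * q) * (f - r * r) - (e - q * r) * (e - q * r)) =
          a * (!![a, b, c; b, d, e; c, e, f]).det := by
        rw [det_fin_three, ← hpp, ← hpq, ← hpr]
        simp only [of_apply, cons_val', cons_val_zero, cons_val_one, cons_val, cons_val_fin_one]
        ring
      exact sub_nonneg.mp (nonneg_of_mul_nonneg_right (by rw [this]; positivity) (by positivity))
  refine ⟨!![p, q, r; 0, s, t; 0, 0, u], ?_, ?_⟩
  · intro i j
    fin_cases i <;> fin_cases j <;> simp [hp.le, hs, ht, hu, div_nonneg, hb, hc, p, q, r]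
  · rw [upperTriangular_transpose_mul_self_fin_three, hpp, hpq, hpr]
    congr <;> linarith

lemma PosDef.hasCPFactorization_of_pivot {A : Matrix (Fin 3) (Fin 3) ℝ}
    (hA : A.PosDef) (hnn : ∀ i j, 0 ≤ A i j) (hpivot : A 0 1 * A 0 2 ≤ A 0 0 * A 1 2) :
    A.HasCPFactorization 3 := by
  have hsymm (i j : Fin 3) : A j i = A i j := by simpa using hA.1.apply i j
  have hA_eq : A = !![A 0 0, A 0 1, A 0 2; A 0 1, A 1 1, A 1 2; A 0 2, A 1 2, A 2 2] := by
    ext i j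
    fin_cases i <;> fin_cases j <;> simp [hsymm 0 1, hsymm 0 2, hsymm 1 2]
  rw [hA_eq]
  exact hasCPFactorization_fin_three_of_pivot hA.diag_pos (hnn 0 1) (hnn 0 2)
    (hA.mul_self_apply_lt (by decide)) hpivot (hA_eq ▸ hA.det_pos.le)

end Matrix

theorem stmt_12 (A : Matrix (Fin 3) (Fin 3) ℝ)
    (hnn : ∀ i j, 0 ≤ A i j) (hpsd : A.PosSemidef) (hrank : A.rank = 3) :
    A.IsCP ∧ A.cpRank = 3 := by
  have hA : A.PosDef := hpsd.posDef_iff_isUnit.mpr (isUnit_of_rank_eq_card (by simpa using hrank))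
  suffices h : A.HasCPFactorization 3 from ⟨h.isCP, h.cpRank_eq hrank⟩
  have hsymm (i j : Fin 3) : A j i = A i j := by simpa using hA.1.apply i j
  have hminor (i j : Fin 3) (hij : i ≠ j) : A i j * A i j ≤ A i i * A j j := (hA.mul_self_apply_lt hij).le
  rcases mul_le_mul_or_of_mul_self_le (hnn 0 0) (hnn 0 1) (hnn 0 2) (hnn 1 1) (hnn 1 2) (hnn 2 2)
      (hminor 0 1 (by decide)) (hminor 0 2 (by decide)) (hminor 1 2 (by decide)) with h | h | h
  · exact hA.hasCPFactorization_of_pivot hnn h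
  · refine .of_submatrix_equiv (Equiv.swap 0 1)
      ((hA.submatrix (Equiv.injective _)).hasCPFactorization_of_pivot (fun _ _ => hnn _ _) ?_)
    simpa [Equiv.swap_apply_of_ne_of_ne, hsymm 0 1] using h
  · refine .of_submatrix_equiv (Equiv.swap 0 2)
      ((hA.submatrix (Equiv.injective _)).hasCPFactorization_of_pivot (fun _ _ => hnn _ _) ?_)
    simpa [Equiv.swap_apply_of_ne_of_ne, hsymm 0 1, hsymm 0 2, hsymm 1 2] using h
end

section
/- Let A = B^T B = C^T C with B, C ∈ ℝ^{r×n} and r = rank(A). Then B is nonnegative-equivalent (nnq) if and only if C is nnq. -/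
/-!
Since `A` has rank `r`, the factor `B` has full row rank, so `B Bᵀ` is invertible. Then
`M = C Bᵀ (B Bᵀ)⁻¹` satisfies `M B = C`: with `P = 1 - Bᵀ (B Bᵀ)⁻¹ B` one has `B P = 0`, hence
`(C P)ᵀ (C P) = Pᵀ Bᵀ B P = 0` and so `C P = 0`. Comparing ranks, `M` is invertible, and a left
factor `M` cancels in `(M B₁)⁻¹ (M B)`, so `M B` is nnq exactly when `B` is.
-/

open Matrix BigOperators

def Matrix.IsNNQ {r n : ℕ} (B : Matrix (Fin r) (Fin n) ℝ) : Prop :=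
  ∃ s : Fin r → Fin n, IsUnit (B.submatrix id s).det ∧
    ∀ i j, 0 ≤ ((B.submatrix id s)⁻¹ * B) i j

namespace Matrix

theorem isUnit_det_of_rank_eq_card {m K : Type*} [Fintype m] [DecidableEq m] [Field K]
    (A : Matrix m m K) (h : A.rank = Fintype.card m) : IsUnit A.det := by
  have hsurj : Function.Surjective A.mulVec := by
    rw [← coe_mulVecLin, ← LinearMap.range_eq_top]
    apply Submodule.eq_top_of_finrank_eq
    rw [← rank, h, Module.finrank_fintype_fun_eq_card]
  exact (isUnit_iff_isUnit_det A).mp (mulVec_surjective_iff_isUnit.mp hsurj)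

section Real

variable {m n : Type*} [Fintype m]

theorem transpose_mul_self_eq_zero_iff (X : Matrix m n ℝ) : Xᵀ * X = 0 ↔ X = 0 := by
  rw [← conjTranspose_eq_transpose_of_trivial, conjTranspose_mul_self_eq_zero]

theorem mul_transpose_mul_inv_mul_eq_of_transpose_mul_self_eq
    [Fintype n] [DecidableEq m] [DecidableEq n]
    {B C : Matrix m n ℝ} (h : Bᵀ * B = Cᵀ * C) (hB : IsUnit (B * Bᵀ).det) :
    C * Bᵀ * (B * Bᵀ)⁻¹ * B = C := by
  set P : Matrix n n ℝ := 1 - Bᵀ * (B * Bᵀ)⁻¹ * B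
  have hBP : B * P = 0 := by
    simp only [P, Matrix.mul_sub, Matrix.mul_one, ← Matrix.mul_assoc,
      mul_nonsing_inv _ hB, Matrix.one_mul, sub_self]
  have hCP : C * P = 0 := by
    rw [← transpose_mul_self_eq_zero_iff]
    calc (C * P)ᵀ * (C * P) = Pᵀ * ((Bᵀ * B) * P) := by
          rw [h, transpose_mul]; simp only [Matrix.mul_assoc]
      _ = 0 := by rw [Matrix.mul_assoc, hBP, Matrix.mul_zero, Matrix.mul_zero]
  rw [Matrix.mul_sub, Matrix.mul_one, sub_eq_zero] at hCP
  simpa only [Matrix.mul_assoc] using hCP.symm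

theorem exists_isUnit_det_mul_eq_of_transpose_mul_self_eq
    [Fintype n] [DecidableEq m] [DecidableEq n]
    {B C : Matrix m n ℝ} (h : Bᵀ * B = Cᵀ * C) (hB : B.rank = Fintype.card m) :
    ∃ M : Matrix m m ℝ, IsUnit M.det ∧ M * B = C := by
  have hBBt : IsUnit (B * Bᵀ).det :=
    isUnit_det_of_rank_eq_card _ (by rw [rank_self_mul_transpose, hB])
  set M := C * Bᵀ * (B * Bᵀ)⁻¹
  have hMB : M * B = C := mul_transpose_mul_inv_mul_eq_of_transpose_mul_self_eq h hBBt
  refine ⟨M, isUnit_det_of_rank_eq_card M (le_antisymm M.rank_le_card_width ?_), hMB⟩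
  calc Fintype.card m = C.rank := by
        rw [← rank_transpose_mul_self, ← h, rank_transpose_mul_self, hB]
    _ = (M * B).rank := by rw [hMB]
    _ ≤ M.rank := rank_mul_le_left M B

end Real

theorem isNNQ_mul_iff {r n : ℕ} {M : Matrix (Fin r) (Fin r) ℝ} (hM : IsUnit M.det)
    (B : Matrix (Fin r) (Fin n) ℝ) : (M * B).IsNNQ ↔ B.IsNNQ := by
  have hsub (s : Fin r → Fin n) : (M * B).submatrix id s = M * B.submatrix id s := by
    rw [submatrix_mul M B id id s Function.bijective_id, submatrix_id_id]
  have hcancel (B₁ : Matrix (Fin r) (Fin r) ℝ) : (M * B₁)⁻¹ * (M * B) = B₁⁻¹ * B := by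
    rw [mul_inv_rev, Matrix.mul_assoc, ← Matrix.mul_assoc M⁻¹, nonsing_inv_mul M hM,
      Matrix.one_mul]
  simp only [IsNNQ, hsub, det_mul, hcancel, IsUnit.mul_iff, hM, true_and]

end Matrix

theorem stmt_16 (r n : ℕ) (A : Matrix (Fin n) (Fin n) ℝ)
    (B C : Matrix (Fin r) (Fin n) ℝ) (hB : A = Bᵀ * B) (hC : A = Cᵀ * C)
    (hrank : A.rank = r) :
    B.IsNNQ ↔ C.IsNNQ := by
  have hBrank : B.rank = Fintype.card (Fin r) := by
    rw [← rank_transpose_mul_self, ← hB, hrank, Fintype.card_fin]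
  obtain ⟨M, hM, rfl⟩ :=
    exists_isUnit_det_mul_eq_of_transpose_mul_self_eq (hB.symm.trans hC) hBrank
  exact (isNNQ_mul_iff hM B).symm
end

section
/- Let A be an n×n doubly nonnegative matrix of rank 3 in block form A = [[A_{11}, A_{12}],[A_{21}, A_{22}]] with A_{11} a 3×3 invertible principal submatrix. If A_{11}^{-1}[A_{11}, A_{12}] is entrywise nonnegative, then A is completely positive with cp-rank(A) = 3. -/
/-!
Since `A₁₁` is invertible and `rank A = 3 = rank A₁₁`, every column of `A` is a combination
of the first three, and comparing the first three rows gives `A = Cᵀ A₁₁ C` with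
`C = A₁₁⁻¹ [A₁₁, A₁₂] ≥ 0`. A positive definite, entrywise nonnegative `3 × 3` matrix has a
nonnegative Cholesky factor `B₁` after possibly swapping the first two indices, so
`A = (B₁ C)ᵀ (B₁ C)` with `B₁ C ≥ 0` of height `3`; no factor can be shorter, because its
height bounds `rank A`.
-/

open Matrix BigOperators

theorem mul_le_mul_or_mul_le_mul_of_sq_lt_mul {R : Type*} [CommRing R] [LinearOrder R]
    [IsStrictOrderedRing R] {x y p q r : R} (hy : 0 ≤ y) (hp : 0 ≤ p) (hq : 0 ≤ q)
    (h : p ^ 2 < x * y) : p * q ≤ x * r ∨ p * r ≤ y * q := by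
  by_contra! ⟨h₁, h₂⟩
  have hr : 0 < r := pos_of_mul_pos_right ((mul_nonneg hy hq).trans_lt h₂) hp
  nlinarith [mul_le_mul_of_nonneg_left h₁.le hy, mul_le_mul_of_nonneg_left h₂.le hp,
    mul_lt_mul_of_pos_left h hr]

namespace Matrix

section RankFactorization

variable {K : Type*} [Field K]

theorem exists_eq_submatrix_mul_of_rank_le {m n n₀ : Type*} [Fintype n] [Fintype n₀]
    (A : Matrix m n K) (c : n₀ → n) (h : A.rank ≤ (A.submatrix id c).rank) :
    ∃ D : Matrix n₀ n K, A = A.submatrix id c * D := by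
  classical
  have hle : LinearMap.range (A.submatrix id c).mulVecLin ≤ LinearMap.range A.mulVecLin := by
    have hsub : A.submatrix id c = A * (1 : Matrix n n K).submatrix id c := by
      simpa using (mul_submatrix_one (Equiv.refl n) c A).symm
    rw [hsub, mulVecLin_mul]
    exact LinearMap.range_comp_le_range _ _
  have hrange := Submodule.eq_of_le_of_finrank_le hle h
  have hcol (j : n) : A.col j ∈ LinearMap.range (A.submatrix id c).mulVecLin := by
    rw [hrange]
    exact ⟨Pi.single j 1, by ext; simp⟩
  choose V hV using hcol
  refine ⟨of fun i j => V j i, ?_⟩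
  ext i j
  exact (congrFun (hV j) i).symm

theorem eq_submatrix_mul_inv_mul_of_rank_eq {ι m : Type*} [Fintype ι] [Fintype m]
    [DecidableEq m] (A : Matrix ι ι K) (s : m → ι) (hs : IsUnit (A.submatrix s s).det)
    (hr : A.rank = Fintype.card m) :
    A = A.submatrix id s * (A.submatrix s s)⁻¹ * A.submatrix s id := by
  have hrs : (A.submatrix s s).rank = Fintype.card m := by
    rw [rank_of_isUnit _ ((isUnit_iff_isUnit_det _).mpr hs)]
  obtain ⟨D, hD⟩ := A.exists_eq_submatrix_mul_of_rank_le s <| by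
    rw [hr, ← hrs]
    exact rank_submatrix_le (A.submatrix id s) s id
  have hrows : A.submatrix s id = A.submatrix s s * D := by
    conv_lhs => rw [hD]
    rfl
  rw [hrows, Matrix.mul_assoc, nonsing_inv_mul_cancel_left _ _ hs]
  exact hD

theorem IsSymm.eq_transpose_mul_mul_of_rank_eq {ι m : Type*} [Fintype ι] [Fintype m]
    [DecidableEq m] {A : Matrix ι ι K} (hA : A.IsSymm) (s : m → ι)
    (hs : IsUnit (A.submatrix s s).det) (hr : A.rank = Fintype.card m) :
    A = ((A.submatrix s s)⁻¹ * A.submatrix s id)ᵀ * A.submatrix s s *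
      ((A.submatrix s s)⁻¹ * A.submatrix s id) := by
  have hcols : A.submatrix id s = (A.submatrix s id)ᵀ := by
    rw [transpose_submatrix, hA.eq]
  conv_lhs => rw [A.eq_submatrix_mul_inv_mul_of_rank_eq s hs hr, hcols]
  rw [transpose_mul, transpose_nonsing_inv, (hA.submatrix s).eq, Matrix.mul_assoc,
    Matrix.mul_assoc, mul_nonsing_inv_cancel_left _ _ hs, Matrix.mul_assoc]

end RankFactorization

theorem PosDef.sq_lt_mul_diag {n : Type*} [Fintype n] {M : Matrix n n ℝ} (hM : M.PosDef)
    {i j : n} (hij : i ≠ j) : M i j ^ 2 < M i i * M j j := by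
  have hinj : Function.Injective ![i, j] := by
    intro a b
    fin_cases a <;> fin_cases b <;> simp [hij, hij.symm]
  have hji : M j i = M i j := hM.isHermitian.apply i j
  have := (hM.submatrix hinj).det_pos
  rw [det_fin_two] at this
  simpa [hji, sq] using this

def HasNonnegGramFactor {n : Type*} [Fintype n] (A : Matrix n n ℝ) (r : ℕ) : Prop :=
  ∃ B : Matrix (Fin r) n ℝ, (∀ i j, 0 ≤ B i j) ∧ A = Bᵀ * B

namespace HasNonnegGramFactor

variable {n : Type*} [Fintype n] {A : Matrix n n ℝ} {r : ℕ}

theorem submatrix (h : A.HasNonnegGramFactor r) {m : Type*} [Fintype m] (e : m → n) :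
    (A.submatrix e e).HasNonnegGramFactor r := by
  obtain ⟨B, hB, rfl⟩ := h
  exact ⟨B.submatrix id e, fun i j => hB _ _, by
    rw [transpose_submatrix, submatrix_mul _ _ _ _ _ Function.bijective_id]⟩

theorem transpose_mul_mul (h : A.HasNonnegGramFactor r) {m : Type*} [Fintype m]
    {C : Matrix n m ℝ} (hC : ∀ i j, 0 ≤ C i j) : (Cᵀ * A * C).HasNonnegGramFactor r := by
  obtain ⟨B, hB, rfl⟩ := h
  refine ⟨B * C, fun i j => Finset.sum_nonneg fun l _ => mul_nonneg (hB i l) (hC l j), ?_⟩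
  rw [transpose_mul, Matrix.mul_assoc, Matrix.mul_assoc, Matrix.mul_assoc]

theorem rank_le (h : A.HasNonnegGramFactor r) : A.rank ≤ r := by
  obtain ⟨B, -, rfl⟩ := h
  rw [rank_transpose_mul_self]
  simpa using B.rank_le_card_height

theorem isCP (h : A.HasNonnegGramFactor r) : A.IsCP := ⟨r, h⟩

theorem cpRank_eq (h : A.HasNonnegGramFactor r) (hr : A.rank = r) : A.cpRank = r := by
  have hmin : A.HasNonnegGramFactor A.cpRank :=
    Nat.sInf_mem (⟨r, h⟩ : ∃ m, A.HasNonnegGramFactor m)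
  exact le_antisymm (Nat.sInf_le h) (hr ▸ hmin.rank_le)

end HasNonnegGramFactor

theorem hasNonnegGramFactor_fin_three {a b c d e f : ℝ} (ha : 0 < a) (hab : 0 < a * d - b ^ 2)
    (hdet : 0 ≤ a * d * f - a * e ^ 2 - b ^ 2 * f + 2 * b * c * e - c ^ 2 * d)
    (hb : 0 ≤ b) (hc : 0 ≤ c) (hbc : b * c ≤ a * e) :
    (!![a, b, c; b, d, e; c, e, f]).HasNonnegGramFactor 3 := by
  set δ := a * d - b ^ 2
  obtain ⟨p, hp, hp2⟩ : ∃ p, 0 < p ∧ p ^ 2 = a := ⟨√a, by positivity, Real.sq_sqrt ha.le⟩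
  obtain ⟨q, hq, hq2⟩ : ∃ q, 0 < q ∧ q ^ 2 = δ := ⟨√δ, by positivity, Real.sq_sqrt hab.le⟩
  obtain ⟨r, hr, hr2⟩ : ∃ r, 0 ≤ r ∧
      r ^ 2 * δ = a * d * f - a * e ^ 2 - b ^ 2 * f + 2 * b * c * e - c ^ 2 * d :=
    ⟨√((a * d * f - a * e ^ 2 - b ^ 2 * f + 2 * b * c * e - c ^ 2 * d) / δ), by positivity,
      by rw [Real.sq_sqrt (by positivity), div_mul_cancel₀ _ hab.ne']⟩
  -- the upper triangular Cholesky factor; `hbc` makes its only entry of undetermined sign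
  -- nonnegative
  refine ⟨!![p, b / p, c / p; 0, q / p, (a * e - b * c) / (p * q); 0, 0, r], ?_, ?_⟩
  · have : 0 ≤ a * e - b * c := by linarith
    intro i j
    fin_cases i <;> fin_cases j <;> simp <;> positivity
  · ext i j
    fin_cases i <;> fin_cases j <;> simp [mul_apply, Fin.sum_univ_three] <;> field_simp <;> grind

theorem PosDef.hasNonnegGramFactor_of_mul_le {M : Matrix (Fin 3) (Fin 3) ℝ} (hM : M.PosDef)
    (hnn : ∀ i j, 0 ≤ M i j) (h : M 0 1 * M 0 2 ≤ M 0 0 * M 1 2) :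
    M.HasNonnegGramFactor 3 := by
  have hsymm : ∀ i j, M j i = M i j := fun i j => hM.isHermitian.apply i j
  have hminor := hM.sq_lt_mul_diag (by decide : (0 : Fin 3) ≠ 1)
  have hdet := hM.det_pos
  rw [det_fin_three, hsymm 0 1, hsymm 0 2, hsymm 1 2] at hdet
  rw [eta_fin_three M, hsymm 0 1, hsymm 0 2, hsymm 1 2]
  exact hasNonnegGramFactor_fin_three hM.diag_pos (by linarith) (by linarith) (hnn 0 1) (hnn 0 2)
    (by linarith)

theorem PosDef.hasNonnegGramFactor_fin_three {M : Matrix (Fin 3) (Fin 3) ℝ} (hM : M.PosDef)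
    (hnn : ∀ i j, 0 ≤ M i j) : M.HasNonnegGramFactor 3 := by
  by_cases h : M 0 1 * M 0 2 ≤ M 0 0 * M 1 2
  · exact hM.hasNonnegGramFactor_of_mul_le hnn h
  set σ : Equiv.Perm (Fin 3) := Equiv.swap 0 1
  have hσ : M 1 0 * M 1 2 ≤ M 1 1 * M 0 2 := by
    rw [show M 1 0 = M 0 1 from hM.isHermitian.apply 0 1]
    exact (mul_le_mul_or_mul_le_mul_of_sq_lt_mul (hnn 1 1) (hnn 0 1) (hnn 0 2)
      (hM.sq_lt_mul_diag (by decide : (0 : Fin 3) ≠ 1))).resolve_left h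
  have hfactor :=
    (hM.submatrix σ.injective).hasNonnegGramFactor_of_mul_le (fun _ _ => hnn _ _) hσ
  simpa [submatrix_submatrix] using hfactor.submatrix σ.symm

end Matrix

theorem stmt_19 (k : ℕ) (A : Matrix (Fin 3 ⊕ Fin k) (Fin 3 ⊕ Fin k) ℝ)
    (hnn : ∀ i j, 0 ≤ A i j) (hpsd : A.PosSemidef) (hrank : A.rank = 3)
    (hinv : IsUnit (A.submatrix Sum.inl Sum.inl).det)
    (h : ∀ i j, 0 ≤ ((A.submatrix Sum.inl Sum.inl)⁻¹ * A.submatrix Sum.inl id) i j) :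
    A.IsCP ∧ A.cpRank = 3 := by
  have hA₁₁ : (A.submatrix Sum.inl Sum.inl).PosDef :=
    (hpsd.submatrix Sum.inl).posDef_iff_det_ne_zero.mpr hinv.ne_zero
  have hfactor : A.HasNonnegGramFactor 3 := by
    rw [(isHermitian_iff_isSymm.mp hpsd.isHermitian).eq_transpose_mul_mul_of_rank_eq Sum.inl hinv
      (by rw [hrank, Fintype.card_fin])]
    exact (hA₁₁.hasNonnegGramFactor_fin_three fun _ _ => hnn _ _).transpose_mul_mul h
  exact ⟨hfactor.isCP, hfactor.cpRank_eq hrank⟩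
end
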